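/- arXiv:2201.13136 — 6 statements merged into one kernel-verified Lean document; each statement's English description precedes it below -/
import Mathlib

section
/- Let X and Y be Hausdorff topological spaces, K : X ⇉ Y a continuous correspondence with nonempty compact values, and θ : X × Y → ℝ a function that is continuous on the graph gra(K). Define the argmax correspondence M₀ : X ⇉ Y by M₀(x) = {y ∈ K(x) : θ(x,y) = sup_{z ∈ K(x)} θ(x,z)} and the value function m : X → ℝ by m(x) = sup_{z ∈ K(x)} θ(x,z). Then M₀ is upper semicontinuous with nonempty compact values, and m is continuous. -/
/-!
Continuity of `θ` on the graph turns a strict inequality at `(x₀, y)` into the same inequality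
on a box `U ×ˢ V` around it, intersected with the graph. Lower hemicontinuity of `K` carries a
single near-maximiser `y₀ ∈ K x₀` into every nearby fibre, so the value `m` is lower
semicontinuous. Compactness of `K x₀` lets finitely many boxes cover `{x₀} ×ˢ K x₀`, and upper
hemicontinuity then confines every nearby fibre to the union of these boxes; applied to `θ < c`
this makes `m` upper semicontinuous, and applied to `θ(x, y) ≠ m x` outside an open `u ⊇ M₀ x₀`
it makes `M₀` upper hemicontinuous.
-/

open Set Filter Topology

section

variable {X Y : Type*} [TopologicalSpace X] [TopologicalSpace Y]

lemma upperHemicontinuous_iff_isClosed_inter_nonempty {K : X → Set Y} :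
    UpperHemicontinuous K ↔ ∀ F : Set Y, IsClosed F → IsClosed {x | (K x ∩ F).Nonempty} := by
  have hlower (F : Set Y) : (K ⁻¹' Iic Fᶜ)ᶜ = {x | (K x ∩ F).Nonempty} := by
    ext x
    simp [Set.Nonempty, subset_def]
  simp only [upperHemicontinuous_iff_isClosed_compl_preimage_Iic_compl, hlower]

lemma ContinuousOn.isCompact_inter_preimage {Z : Type*} [TopologicalSpace Z] {f : Y → Z}
    {s : Set Y} {t : Set Z} (hf : ContinuousOn f s) (hs : IsCompact s) (ht : IsClosed t) :
    IsCompact (s ∩ f ⁻¹' t) := by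
  obtain ⟨u, hu, hfu⟩ := continuousOn_iff_isClosed.1 hf t ht
  rw [inter_comm, hfu, inter_comm]
  exact hs.inter_right hu

variable {K : X → Set Y} {x₀ : X} {S : Set (X × Y)}

lemma LowerHemicontinuousAt.eventually_exists_mem_of_mem_nhdsWithin_graph
    (hK : LowerHemicontinuousAt K x₀) {y₀ : Y} (hy₀ : y₀ ∈ K x₀)
    (hS : S ∈ 𝓝[{p : X × Y | p.2 ∈ K p.1}] (x₀, y₀)) :
    ∀ᶠ x in 𝓝 x₀, ∃ y ∈ K x, (x, y) ∈ S := by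
  obtain ⟨T, hT, hTS⟩ := mem_nhdsWithin_iff_exists_mem_nhds_inter.1 hS
  obtain ⟨U, V, hU, hx₀U, hV, hy₀V, hUV⟩ := mem_nhds_prod_iff'.1 hT
  filter_upwards [hU.mem_nhds hx₀U, lowerHemicontinuousAt_iff.1 hK V hV ⟨y₀, hy₀, hy₀V⟩]
    with x hxU ⟨y, hyK, hyV⟩
  exact ⟨y, hyK, hTS ⟨hUV ⟨hxU, hyV⟩, hyK⟩⟩

lemma UpperHemicontinuousAt.eventually_forall_mem_of_mem_nhdsWithin_graph
    (hK : UpperHemicontinuousAt K x₀) (hKx₀ : IsCompact (K x₀))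
    (hS : ∀ y ∈ K x₀, S ∈ 𝓝[{p : X × Y | p.2 ∈ K p.1}] (x₀, y)) :
    ∀ᶠ x in 𝓝 x₀, ∀ y ∈ K x, (x, y) ∈ S := by
  have hT : {p : X × Y | p.2 ∈ K p.1 → p ∈ S} ∈ 𝓝 x₀ ×ˢ 𝓝ˢ (K x₀) :=
    hKx₀.mem_prod_nhdsSet_of_forall fun y hy => by
      rw [← nhds_prod_eq]
      exact mem_nhdsWithin_iff_eventually.1 (hS y hy)
  obtain ⟨U, hU, V, hV, hUV⟩ := mem_prod_iff.1 hT
  filter_upwards [hU, upperHemicontinuousAt_iff.1 hK V hV] with x hxU hxV y hy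
  exact hUV ⟨hxU, subset_of_mem_nhdsSet hxV hy⟩ hy

variable {θ : X × Y → ℝ}

lemma ContinuousOn.fiber (hθ : ContinuousOn θ {p : X × Y | p.2 ∈ K p.1}) (x : X) :
    ContinuousOn (fun y => θ (x, y)) (K x) :=
  hθ.comp (Continuous.prodMk_right x).continuousOn fun _ hy => hy

lemma lowerSemicontinuous_sSup_image (hKcomp : ∀ x, IsCompact (K x)) (hKne : ∀ x, (K x).Nonempty)
    (hθ : ContinuousOn θ {p : X × Y | p.2 ∈ K p.1})
    (hK : LowerHemicontinuous K) :
    LowerSemicontinuous fun x => sSup ((fun y => θ (x, y)) '' K x) := by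
  intro x₀ c hc
  obtain ⟨_, ⟨y₀, hy₀, rfl⟩, hcy₀⟩ := exists_lt_of_lt_csSup ((hKne x₀).image _) hc
  have hS : {p | c < θ p} ∈ 𝓝[{p : X × Y | p.2 ∈ K p.1}] (x₀, y₀) :=
    hθ _ hy₀ (Ioi_mem_nhds hcy₀)
  filter_upwards
    [(hK.lowerHemicontinuousAt x₀).eventually_exists_mem_of_mem_nhdsWithin_graph hy₀ hS]
    with x ⟨y, hy, hcy⟩
  exact hcy.trans_le <|
    le_csSup ((hKcomp x).bddAbove_image (hθ.fiber x)) (mem_image_of_mem _ hy)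

lemma upperSemicontinuous_sSup_image (hKcomp : ∀ x, IsCompact (K x)) (hKne : ∀ x, (K x).Nonempty)
    (hθ : ContinuousOn θ {p : X × Y | p.2 ∈ K p.1})
    (hK : UpperHemicontinuous K) :
    UpperSemicontinuous fun x => sSup ((fun y => θ (x, y)) '' K x) := by
  intro x₀ c hc
  have hS : ∀ y ∈ K x₀, {p | θ p < c} ∈ 𝓝[{p : X × Y | p.2 ∈ K p.1}] (x₀, y) :=
    fun y hy => hθ _ hy <| Iio_mem_nhds <|
      (le_csSup ((hKcomp x₀).bddAbove_image (hθ.fiber x₀)) (mem_image_of_mem _ hy)).trans_lt hc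
  filter_upwards
    [(hK.upperHemicontinuousAt x₀).eventually_forall_mem_of_mem_nhdsWithin_graph (hKcomp x₀) hS]
    with x hx
  obtain ⟨y, hy, hmax⟩ := (hKcomp x).exists_sSup_image_eq (hKne x) (hθ.fiber x)
  exact hmax ▸ hx y hy

lemma continuous_sSup_image (hKcomp : ∀ x, IsCompact (K x)) (hKne : ∀ x, (K x).Nonempty)
    (hθ : ContinuousOn θ {p : X × Y | p.2 ∈ K p.1})
    (hKl : LowerHemicontinuous K) (hKu : UpperHemicontinuous K) :
    Continuous fun x => sSup ((fun y => θ (x, y)) '' K x) :=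
  continuous_iff_lower_upperSemicontinuous.2
    ⟨lowerSemicontinuous_sSup_image hKcomp hKne hθ hKl,
      upperSemicontinuous_sSup_image hKcomp hKne hθ hKu⟩

lemma UpperHemicontinuous.sep_eq (hK : UpperHemicontinuous K) (hKcomp : ∀ x, IsCompact (K x))
    (hθ : ContinuousOn θ {p : X × Y | p.2 ∈ K p.1}) {φ : X → ℝ} (hφ : Continuous φ) :
    UpperHemicontinuous fun x => {y ∈ K x | θ (x, y) = φ x} := by
  refine upperHemicontinuous_iff_forall_isOpen.2 fun x₀ u hu hsub => ?_
  have hS : ∀ y ∈ K x₀,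
      {p : X × Y | p.2 ∈ u ∨ θ p ≠ φ p.1} ∈ 𝓝[{p : X × Y | p.2 ∈ K p.1}] (x₀, y) := by
    intro y hy
    by_cases hyu : y ∈ u
    · exact mem_nhdsWithin_of_mem_nhds <|
        mem_of_superset ((hu.preimage continuous_snd).mem_nhds hyu) fun _ hp => Or.inl hp
    · have hne : θ (x₀, y) - φ x₀ ≠ 0 := sub_ne_zero.2 fun h => hyu (hsub ⟨hy, h⟩)
      exact (((hθ _ hy).sub (hφ.comp continuous_fst).continuousWithinAt).eventually_ne
        hne).mono fun _ hp => Or.inr (sub_ne_zero.1 hp)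
  filter_upwards
    [(hK.upperHemicontinuousAt x₀).eventually_forall_mem_of_mem_nhdsWithin_graph (hKcomp x₀) hS]
    with x hx y ⟨hy, hyφ⟩
  exact (hx y hy).resolve_right (not_not.2 hyφ)

end

theorem berge_maximum_theorem_general
    {X Y : Type*} [TopologicalSpace X] [TopologicalSpace Y]
    (K : X → Set Y)
    (hKne : ∀ x, (K x).Nonempty) (hKcomp : ∀ x, IsCompact (K x))
    (hKlsc : ∀ G : Set Y, IsOpen G → IsOpen {x | (K x ∩ G).Nonempty})
    (hKusc : ∀ F : Set Y, IsClosed F → IsClosed {x | (K x ∩ F).Nonempty})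
    (θ : X × Y → ℝ) (hθ : ContinuousOn θ {p : X × Y | p.2 ∈ K p.1})
    (m : X → ℝ) (hm : ∀ x, m x = sSup ((fun z => θ (x, z)) '' K x))
    (M₀ : X → Set Y) (hM₀ : ∀ x, M₀ x = {y ∈ K x | θ (x, y) = m x}) :
    (∀ F : Set Y, IsClosed F → IsClosed {x | (M₀ x ∩ F).Nonempty}) ∧
    (∀ x, (M₀ x).Nonempty) ∧ (∀ x, IsCompact (M₀ x)) ∧ Continuous m := by
  have hKl : LowerHemicontinuous K := lowerHemicontinuous_iff_isOpen_inter_nonempty.2 hKlsc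
  have hKu : UpperHemicontinuous K := upperHemicontinuous_iff_isClosed_inter_nonempty.2 hKusc
  obtain rfl : m = fun x => sSup ((fun z => θ (x, z)) '' K x) := funext hm
  obtain rfl : M₀ = fun x => {y ∈ K x | θ (x, y) = sSup ((fun z => θ (x, z)) '' K x)} :=
    funext hM₀
  have hmc := continuous_sSup_image hKcomp hKne hθ hKl hKu
  refine ⟨upperHemicontinuous_iff_isClosed_inter_nonempty.1 (hKu.sep_eq hKcomp hθ hmc),
    fun x => ?_, fun x => (hθ.fiber x).isCompact_inter_preimage (hKcomp x) isClosed_singleton, hmc⟩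
  obtain ⟨y, hy, hmax⟩ := (hKcomp x).exists_sSup_image_eq (hKne x) (hθ.fiber x)
  exact ⟨y, hy, hmax.symm⟩

/-- **Berge's maximum theorem.** If `K : X ⇉ Y` is a continuous correspondence with
nonempty compact values and `θ` is continuous on the graph of `K`, then the argmax
correspondence `M₀` is upper semicontinuous with nonempty compact values, and the
value function `m` is continuous. -/
theorem berge_maximum_theorem
    {X Y : Type*} [TopologicalSpace X] [T2Space X] [TopologicalSpace Y] [T2Space Y]
    (K : X → Set Y)
    (hKne : ∀ x, (K x).Nonempty) (hKcomp : ∀ x, IsCompact (K x))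
    (hKlsc : ∀ G : Set Y, IsOpen G → IsOpen {x | (K x ∩ G).Nonempty})
    (hKusc : ∀ F : Set Y, IsClosed F → IsClosed {x | (K x ∩ F).Nonempty})
    (θ : X × Y → ℝ) (hθ : ContinuousOn θ {p : X × Y | p.2 ∈ K p.1})
    (m : X → ℝ) (hm : ∀ x, m x = sSup ((fun z => θ (x, z)) '' K x))
    (M₀ : X → Set Y) (hM₀ : ∀ x, M₀ x = {y ∈ K x | θ (x, y) = m x}) :
    (∀ F : Set Y, IsClosed F → IsClosed {x | (M₀ x ∩ F).Nonempty}) ∧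
    (∀ x, (M₀ x).Nonempty) ∧ (∀ x, IsCompact (M₀ x)) ∧ Continuous m :=
  berge_maximum_theorem_general K hKne hKcomp hKlsc hKusc θ hθ m hm M₀ hM₀
end

section
/- Let X and Y be Hausdorff topological spaces, K : X ⇉ Y a continuous correspondence with nonempty compact values whose graph gra(K), with the subspace topology of X × Y, is a normal topological space, and M : X ⇉ Y a correspondence with nonempty values such that M(x) ⊆ K(x) for all x ∈ X. Suppose there exists a function θ : X × Y → [0,1], continuous on gra(K), such that gra(M) = {(x,y) ∈ gra(K) : θ(x,y) = sup_{z ∈ K(x)} θ(x,z)}. Then gra(M) is a closed subset of the subspace gra(K) and a Gδ subset of the subspace gra(K), i.e. there is a countable family (Uₙ) of open subsets of X × Y with gra(M) = gra(K) ∩ ⋂ₙ Uₙ. -/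
open Set

/-- The graph of a correspondence `K : X ⇉ Y`. -/
def corrGraph {X Y : Type*} (K : X → Set Y) : Set (X × Y) := {p | p.2 ∈ K p.1}

/-!
By Berge's maximum theorem the value function `m x = sup_{y ∈ K x} θ (x, y)` is continuous, so
`gra M` is the zero set, inside `gra K`, of the function `θ - m ∘ Prod.fst`, which is continuous
on `gra K`. The preimage of the closed set `{0}` is relatively closed, and that of the `Gδ` set
`{0}` is relatively `Gδ`.
-/

lemma upperHemicontinuous_iff_isClosed_inter_nonempty_s1 {α β : Type*} [TopologicalSpace α]
    [TopologicalSpace β] {f : α → Set β} :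
    UpperHemicontinuous f ↔ ∀ u, IsClosed u → IsClosed {x | (f x ∩ u).Nonempty} := by
  have (u : Set β) : (f ⁻¹' Iic uᶜ)ᶜ = {x | (f x ∩ u).Nonempty} := by
    ext x
    simp [Set.subset_compl_iff_disjoint_right, Set.not_disjoint_iff_nonempty_inter]
  simp only [upperHemicontinuous_iff_isClosed_compl_preimage_Iic_compl, this]

lemma ContinuousOn.exists_isOpen_nat_preimage_inter {α β : Type*} [TopologicalSpace α]
    [TopologicalSpace β] {f : α → β} {s : Set α} {t : Set β} (hf : ContinuousOn f s)
    (ht : IsGδ t) :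
    ∃ U : ℕ → Set α, (∀ n, IsOpen (U n)) ∧ f ⁻¹' t ∩ s = s ∩ ⋂ n, U n := by
  obtain ⟨V, hVo, rfl⟩ := ht.eq_iInter_nat
  choose U hUo hUV using fun n => continuousOn_iff'.1 hf (V n) (hVo n)
  refine ⟨U, hUo, ?_⟩
  rw [preimage_iInter, iInter_inter, iInter_congr hUV, ← iInter_inter, inter_comm]

section MaxValue

variable {X Y : Type*} [TopologicalSpace X] [TopologicalSpace Y] {K : X → Set Y}
  {θ : X × Y → ℝ}

noncomputable def maxValue (K : X → Set Y) (θ : X × Y → ℝ) (x : X) : ℝ :=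
  sSup ((fun y => θ (x, y)) '' K x)

lemma isGreatest_maxValue {x : X} (hKne : (K x).Nonempty) (hKc : IsCompact (K x))
    (hθ : ContinuousOn θ (corrGraph K)) :
    IsGreatest ((fun y => θ (x, y)) '' K x) (maxValue K θ x) :=
  (hKc.image_of_continuousOn (hθ.comp (Continuous.prodMk_right x).continuousOn
    fun _ hy => hy)).isGreatest_sSup (hKne.image _)

lemma lowerSemicontinuous_maxValue (hK : LowerHemicontinuous K) (hKne : ∀ x, (K x).Nonempty)
    (hKc : ∀ x, IsCompact (K x)) (hθ : ContinuousOn θ (corrGraph K)) :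
    LowerSemicontinuous (maxValue K θ) := by
  intro x₀ c hc
  obtain ⟨⟨z, hz, hθz⟩, -⟩ := isGreatest_maxValue (hKne x₀) (hKc x₀) hθ
  obtain ⟨u, hu, hθu⟩ := continuousOn_iff'.1 hθ (Ioi c) isOpen_Ioi
  have hz_mem : (x₀, z) ∈ u := (hθu.le ⟨hc.trans_eq hθz.symm, hz⟩).1
  obtain ⟨A, V, hA, hV, hxA, hzV, hAV⟩ := isOpen_prod_iff.1 hu x₀ z hz_mem
  filter_upwards [hA.mem_nhds hxA,
    lowerHemicontinuousAt_iff.1 (hK x₀) V hV ⟨z, hz, hzV⟩] with x hxA ⟨y, hy, hyV⟩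
  have hθy : c < θ (x, y) := (hθu.ge ⟨hAV ⟨hxA, hyV⟩, hy⟩).1
  exact hθy.trans_le ((isGreatest_maxValue (hKne x) (hKc x) hθ).2 ⟨y, hy, rfl⟩)

lemma upperSemicontinuous_maxValue (hK : UpperHemicontinuous K) (hKne : ∀ x, (K x).Nonempty)
    (hKc : ∀ x, IsCompact (K x)) (hθ : ContinuousOn θ (corrGraph K)) :
    UpperSemicontinuous (maxValue K θ) := by
  intro x₀ c hc
  obtain ⟨u, hu, hθu⟩ := continuousOn_iff'.1 hθ (Iio c) isOpen_Iio
  have htube : {x₀} ×ˢ K x₀ ⊆ u := by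
    rintro ⟨x, y⟩ ⟨rfl, hy⟩
    have : θ (x, y) < c :=
      ((isGreatest_maxValue (hKne x) (hKc x) hθ).2 ⟨y, hy, rfl⟩).trans_lt hc
    exact (hθu.le ⟨this, hy⟩).1
  obtain ⟨A, V, hA, hV, hxA, hKV, hAV⟩ :=
    generalized_tube_lemma isCompact_singleton (hKc x₀) hu htube
  filter_upwards [hA.mem_nhds (hxA rfl),
    upperHemicontinuous_iff_forall_isOpen.1 hK x₀ V hV hKV] with x hxA hKxV
  obtain ⟨⟨z, hz, hθz⟩, -⟩ := isGreatest_maxValue (hKne x) (hKc x) hθ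
  rw [← hθz]
  exact (hθu.ge ⟨hAV ⟨hxA, hKxV hz⟩, hz⟩).1

/-- Berge's maximum theorem. -/
theorem continuous_maxValue (hKl : LowerHemicontinuous K) (hKu : UpperHemicontinuous K)
    (hKne : ∀ x, (K x).Nonempty) (hKc : ∀ x, IsCompact (K x))
    (hθ : ContinuousOn θ (corrGraph K)) : Continuous (maxValue K θ) :=
  continuous_iff_lower_upperSemicontinuous.2
    ⟨lowerSemicontinuous_maxValue hKl hKne hKc hθ, upperSemicontinuous_maxValue hKu hKne hKc hθ⟩

end MaxValue

theorem inverse_maximum_a_implies_b_general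
    {X Y : Type*} [TopologicalSpace X] [TopologicalSpace Y]
    (K M : X → Set Y)
    (hKne : ∀ x, (K x).Nonempty) (hKcomp : ∀ x, IsCompact (K x))
    (hKlsc : ∀ G : Set Y, IsOpen G → IsOpen {x | (K x ∩ G).Nonempty})
    (hKusc : ∀ F : Set Y, IsClosed F → IsClosed {x | (K x ∩ F).Nonempty})
    (θ : X × Y → ℝ)
    (hθc : ContinuousOn θ (corrGraph K))
    (hargmax : corrGraph M =
      {p ∈ corrGraph K | θ p = sSup ((fun z => θ (p.1, z)) '' K p.1)}) :
    (∃ C : Set (X × Y), IsClosed C ∧ corrGraph M = C ∩ corrGraph K) ∧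
    (∃ U : ℕ → Set (X × Y), (∀ n, IsOpen (U n)) ∧
      corrGraph M = corrGraph K ∩ ⋂ n, U n) := by
  have hm := continuous_maxValue (lowerHemicontinuous_iff_isOpen_inter_nonempty.2 hKlsc)
    (upperHemicontinuous_iff_isClosed_inter_nonempty_s1.2 hKusc) hKne hKcomp hθc
  have hgap : ContinuousOn (fun p => θ p - maxValue K θ p.1) (corrGraph K) :=
    hθc.sub (hm.comp continuous_fst).continuousOn
  have hM : corrGraph M = (fun p => θ p - maxValue K θ p.1) ⁻¹' {0} ∩ corrGraph K := by
    rw [hargmax]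
    ext p
    simp [maxValue, sub_eq_zero, and_comm]
  obtain ⟨C, hC, hCeq⟩ := continuousOn_iff_isClosed.1 hgap {0} isClosed_singleton
  obtain ⟨U, hU, hUeq⟩ := hgap.exists_isOpen_nat_preimage_inter (IsGδ.singleton 0)
  exact ⟨⟨C, hC, hM.trans hCeq⟩, ⟨U, hU, hM.trans hUeq⟩⟩

/-- If `K : X ⇉ Y` is a continuous correspondence with nonempty compact values whose
graph is a normal space, `M` has nonempty values with `M x ⊆ K x`, and there is a
function `θ : X × Y → [0,1]`, continuous on `gra K`, realizing `M` as the argmax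
correspondence of `θ` over `K`, then `gra M` is closed in the subspace `gra K` and a
`Gδ` subset of the subspace `gra K`. -/
theorem inverse_maximum_a_implies_b
    {X Y : Type*} [TopologicalSpace X] [T2Space X] [TopologicalSpace Y] [T2Space Y]
    (K M : X → Set Y)
    (hKne : ∀ x, (K x).Nonempty) (hKcomp : ∀ x, IsCompact (K x))
    (hKlsc : ∀ G : Set Y, IsOpen G → IsOpen {x | (K x ∩ G).Nonempty})
    (hKusc : ∀ F : Set Y, IsClosed F → IsClosed {x | (K x ∩ F).Nonempty})
    (hnormal : NormalSpace (corrGraph K))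
    (hMne : ∀ x, (M x).Nonempty) (hMK : ∀ x, M x ⊆ K x)
    (θ : X × Y → ℝ)
    (hθc : ContinuousOn θ (corrGraph K))
    (hθ01 : ∀ p ∈ corrGraph K, θ p ∈ Icc (0 : ℝ) 1)
    (hargmax : corrGraph M =
      {p ∈ corrGraph K | θ p = sSup ((fun z => θ (p.1, z)) '' K p.1)}) :
    (∃ C : Set (X × Y), IsClosed C ∧ corrGraph M = C ∩ corrGraph K) ∧
    (∃ U : ℕ → Set (X × Y), (∀ n, IsOpen (U n)) ∧
      corrGraph M = corrGraph K ∩ ⋂ n, U n) :=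
  inverse_maximum_a_implies_b_general K M hKne hKcomp hKlsc hKusc θ hθc hargmax
end

section
/- Let X and Y be Hausdorff topological spaces, K : X ⇉ Y a continuous correspondence with nonempty compact values whose graph gra(K), with the subspace topology of X × Y, is a normal topological space, and M : X ⇉ Y a correspondence with nonempty values such that M(x) ⊆ K(x) for all x ∈ X. If gra(M) is a closed subset of the subspace gra(K) and a Gδ subset of the subspace gra(K) (i.e. there is a countable family (Uₙ) of open subsets of X × Y with gra(M) = gra(K) ∩ ⋂ₙ Uₙ), then there exists a function θ : X × Y → [0,1], continuous on gra(K), such that gra(M) = {(x,y) ∈ gra(K) : θ(x,y) = sup_{z ∈ K(x)} θ(x,z)}. -/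
/-!
In the normal space `gra K`, the closed `Gδ` set `gra M` is the zero set of a continuous
`f : gra K → [0,1]`. Then `θ = 1 - f` is at most `1` on `gra K` and equals `1` exactly on
`gra M`; as every `M x` is nonempty, the supremum of `θ (x, ·)` over `K x` is `1`, so the
maximizers are exactly the points of `gra M`.
-/

open Set

/- Writing `s = ⋂ n, U n`, take Urysohn functions `f n` vanishing on `s` and equal to `1` off
`U n`; then `∑ n, 2⁻ⁿ⁻¹ f n` converges uniformly and vanishes exactly on `s`. -/
theorem exists_continuous_preimage_zero_of_isClosed_of_isGδ {Z : Type*} [TopologicalSpace Z]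
    [NormalSpace Z] {s : Set Z} (hs : IsClosed s) (hsδ : IsGδ s) :
    ∃ f : C(Z, ℝ), s = f ⁻¹' {0} ∧ ∀ z, f z ∈ Icc (0 : ℝ) 1 := by
  obtain ⟨U, hUo, hsU⟩ := isGδ_iff_eq_iInter_nat.1 hsδ
  have hdisj (n : ℕ) : Disjoint s (U n)ᶜ :=
    disjoint_compl_right_iff_subset.2 (hsU ▸ iInter_subset U n)
  choose f hfs hfU hf01 using fun n =>
    exists_continuous_zero_one_of_isClosed hs (hUo n).isClosed_compl (hdisj n)
  have hbound (z : Z) (n : ℕ) : ‖f n z * (1 / 2 / 2 ^ n)‖ ≤ 1 / 2 / 2 ^ n := by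
    simp [abs_of_nonneg (hf01 n z).1, (hf01 n z).2]
  have hsum (z : Z) : Summable fun n => f n z * (1 / 2 / 2 ^ n) :=
    (summable_geometric_two' 1).of_norm_bounded (hbound z)
  let g : C(Z, ℝ) :=
    { toFun z := ∑' n, f n z * (1 / 2 / 2 ^ n)
      continuous_toFun :=
        continuous_tsum (fun n => by fun_prop) (summable_geometric_two' 1) fun n z => hbound z n }
  refine ⟨g, Subset.antisymm (fun z hz => ?_) (fun z hz => ?_), fun z => ⟨?_, ?_⟩⟩
  · simp [g, fun n => hfs n hz]
  · by_contra hzs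
    obtain ⟨n, hn⟩ : ∃ n, z ∉ U n := by simpa [hsU] using hzs
    have hpos : 0 < g z := calc
      (0 : ℝ) < f n z * (1 / 2 / 2 ^ n) := by simp [hfU n hn]
      _ ≤ g z := (hsum z).le_tsum n fun m _ => by positivity [(hf01 m z).1]
    exact hpos.ne' hz
  · exact tsum_nonneg fun n => by positivity [(hf01 n z).1]
  · calc g z ≤ ∑' n : ℕ, (1 / 2 / 2 ^ n : ℝ) :=
          (hsum z).tsum_le_tsum (fun n => by simp [(hf01 n z).2]) (summable_geometric_two' 1)
      _ = 1 := tsum_geometric_two' 1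

theorem exists_continuousOn_restrict_eq {Z β : Type*} [TopologicalSpace Z] [TopologicalSpace β]
    [Nonempty β] {s : Set Z} (g : C(s, β)) :
    ∃ θ : Z → β, ContinuousOn θ s ∧ ∀ z : s, θ z = g z := by
  let θ := Function.extend Subtype.val g fun _ => Classical.arbitrary β
  have hθ (z : s) : θ z = g z := Subtype.val_injective.extend_apply _ _ z
  refine ⟨θ, continuousOn_iff_continuous_domRestrict.2 ?_, hθ⟩
  exact (funext hθ : s.domRestrict θ = g) ▸ g.continuous

theorem corrGraph_eq_setOf_eq_sSup {X Y : Type*} {K M : X → Set Y} {θ : X × Y → ℝ} {c : ℝ}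
    (hMne : ∀ x, (M x).Nonempty) (hMK : ∀ x, M x ⊆ K x)
    (hθle : ∀ p ∈ corrGraph K, θ p ≤ c) (hθc : ∀ p ∈ corrGraph K, θ p = c ↔ p ∈ corrGraph M) :
    corrGraph M = {p ∈ corrGraph K | θ p = sSup ((fun z => θ (p.1, z)) '' K p.1)} := by
  have hsup (x : X) : sSup ((fun z => θ (x, z)) '' K x) = c := by
    obtain ⟨z, hz⟩ := hMne x
    refine IsGreatest.csSup_eq ⟨⟨z, hMK x hz, (hθc (x, z) (hMK x hz)).2 hz⟩, ?_⟩
    rintro _ ⟨w, hw, rfl⟩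
    exact hθle (x, w) hw
  ext p
  simp only [mem_sep_iff, hsup]
  exact ⟨fun hp => ⟨hMK p.1 hp, (hθc p (hMK p.1 hp)).2 hp⟩, fun ⟨hpK, hp⟩ => (hθc p hpK).1 hp⟩

theorem inverse_maximum_b_implies_a_general
    {X Y : Type*} [TopologicalSpace X] [TopologicalSpace Y]
    (K M : X → Set Y)
    (hnormal : NormalSpace (corrGraph K))
    (hMne : ∀ x, (M x).Nonempty) (hMK : ∀ x, M x ⊆ K x)
    (hclosed : ∃ C : Set (X × Y), IsClosed C ∧ corrGraph M = C ∩ corrGraph K)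
    (hGδ : ∃ U : ℕ → Set (X × Y), (∀ n, IsOpen (U n)) ∧
      corrGraph M = corrGraph K ∩ ⋂ n, U n) :
    ∃ θ : X × Y → ℝ, ContinuousOn θ (corrGraph K) ∧
      (∀ p ∈ corrGraph K, θ p ∈ Icc (0 : ℝ) 1) ∧
      corrGraph M = {p ∈ corrGraph K | θ p = sSup ((fun z => θ (p.1, z)) '' K p.1)} := by
  obtain ⟨C, hC, hMC⟩ := hclosed
  obtain ⟨U, hU, hMU⟩ := hGδ
  let A : Set (corrGraph K) := Subtype.val ⁻¹' corrGraph M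
  have hAC : A = Subtype.val ⁻¹' C := by
    ext p; simp [A, hMC]
  have hAU : A = ⋂ n, Subtype.val ⁻¹' U n := by
    ext p; simp [A, hMU]
  obtain ⟨f, hAf, hf01⟩ := exists_continuous_preimage_zero_of_isClosed_of_isGδ
    (hAC ▸ hC.preimage continuous_subtype_val)
    (hAU ▸ IsGδ.iInter_of_isOpen fun n => (hU n).preimage continuous_subtype_val)
  obtain ⟨θ, hθcont, hθf⟩ := exists_continuousOn_restrict_eq (ContinuousMap.const _ 1 - f)
  have hθ (p : X × Y) (hp : p ∈ corrGraph K) : θ p = 1 - f ⟨p, hp⟩ := hθf ⟨p, hp⟩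
  refine ⟨θ, hθcont, fun p hp => ?_, corrGraph_eq_setOf_eq_sSup (c := 1) hMne hMK
    (fun p hp => ?_) (fun p hp => ?_)⟩
  · obtain ⟨hf0, hf1⟩ := hf01 ⟨p, hp⟩
    rw [hθ p hp]
    constructor <;> linarith
  · linarith [hθ p hp, (hf01 ⟨p, hp⟩).1]
  · have hMf : p ∈ corrGraph M ↔ f ⟨p, hp⟩ = 0 := Set.ext_iff.1 hAf ⟨p, hp⟩
    rw [hθ p hp, hMf]
    constructor <;> intro h <;> linarith

/-- If `K : X ⇉ Y` is a continuous correspondence with nonempty compact values whose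
graph is a normal space, `M` has nonempty values with `M x ⊆ K x`, and `gra M` is a
closed and `Gδ` subset of the subspace `gra K`, then there exists a function
`θ : X × Y → [0,1]`, continuous on `gra K`, realizing `M` as the argmax
correspondence of `θ` over `K`. -/
theorem inverse_maximum_b_implies_a
    {X Y : Type*} [TopologicalSpace X] [T2Space X] [TopologicalSpace Y] [T2Space Y]
    (K M : X → Set Y)
    (hKne : ∀ x, (K x).Nonempty) (hKcomp : ∀ x, IsCompact (K x))
    (hKlsc : ∀ G : Set Y, IsOpen G → IsOpen {x | (K x ∩ G).Nonempty})
    (hKusc : ∀ F : Set Y, IsClosed F → IsClosed {x | (K x ∩ F).Nonempty})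
    (hnormal : NormalSpace (corrGraph K))
    (hMne : ∀ x, (M x).Nonempty) (hMK : ∀ x, M x ⊆ K x)
    (hclosed : ∃ C : Set (X × Y), IsClosed C ∧ corrGraph M = C ∩ corrGraph K)
    (hGδ : ∃ U : ℕ → Set (X × Y), (∀ n, IsOpen (U n)) ∧
      corrGraph M = corrGraph K ∩ ⋂ n, U n) :
    ∃ θ : X × Y → ℝ, ContinuousOn θ (corrGraph K) ∧
      (∀ p ∈ corrGraph K, θ p ∈ Icc (0 : ℝ) 1) ∧
      corrGraph M = {p ∈ corrGraph K | θ p = sSup ((fun z => θ (p.1, z)) '' K p.1)} :=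
  inverse_maximum_b_implies_a_general K M hnormal hMne hMK hclosed hGδ
end

section
/- Let X be a Hausdorff topological space and Y a Hausdorff topological space which is also a real vector space. Let K, M : X ⇉ Y be correspondences such that M(x) is nonempty and M(x) ⊆ K(x) for all x ∈ X. Suppose there exists a family {U_t}_{t>0} of subsets of gra(K), each open in the subspace topology of gra(K), such that: (i) ⋃_{t>0} U_t = gra(K); (ii) the closure of U_s in gra(K) is contained in U_t whenever 0 < s < t; (iii) gra(M) = ⋂_{t>0} U_t; and (iv) for every t > 0 and x ∈ X, the section {y ∈ Y : (x,y) ∈ U_t} is convex. Then there exists a function θ : X × Y → [0,1], continuous on gra(K), such that (v) gra(M) = {(x,y) ∈ gra(K) : θ(x,y) = sup_{z ∈ K(x)} θ(x,z)}, and (vi) for every x ∈ X and every s > 0, the superlevel set {y ∈ Y : (x,y) ∈ gra(K) and θ(x,y) ≥ s} is convex. -/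
open Set

/-!
Let `τ p = inf {t > 0 | p ∈ U t}`. Since the closure of `U s` in `gra K` lies in `U t` for
`s < t`, the family is increasing, and `τ` is continuous on `gra K`: openness of the `U t` makes
`τ` upper semicontinuous, the closure condition makes it lower semicontinuous. A sublevel set
`{τ ≤ c}` of a fibre is the intersection of the convex sections of the `U t` with `t > c`, and `τ`
vanishes exactly on `⋂ t, U t = gra M`. Hence `θ = exp (-τ)` works: its maximum `1` on each
fibre is attained on `M x ≠ ∅`.
-/

open Filter Topology

/-- The `τ` above; it is the junk value `sInf ∅ = 0` when `p` lies in no `U t`. -/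
noncomputable def hittingLevel {α : Type*} (U : ℝ → Set α) (p : α) : ℝ :=
  sInf {t | 0 < t ∧ p ∈ U t}

section Order

variable {α : Type*} {U : ℝ → Set α} {p : α} {c t : ℝ}

theorem hittingLevel_nonneg (U : ℝ → Set α) (p : α) : 0 ≤ hittingLevel U p :=
  Real.sInf_nonneg fun _ ht => ht.1.le

theorem hittingLevel_le (ht : 0 < t) (hp : p ∈ U t) : hittingLevel U p ≤ t :=
  csInf_le ⟨0, fun _ hs => hs.1.le⟩ ⟨ht, hp⟩

theorem mem_of_hittingLevel_lt (hmono : ∀ s t, 0 < s → s < t → U s ⊆ U t)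
    (hp : ∃ t, 0 < t ∧ p ∈ U t) (h : hittingLevel U p < t) : p ∈ U t := by
  obtain ⟨s, ⟨hs, hps⟩, hst⟩ := exists_lt_of_csInf_lt hp h
  exact hmono s t hs hst hps

theorem hittingLevel_le_iff (hmono : ∀ s t, 0 < s → s < t → U s ⊆ U t)
    (hp : ∃ t, 0 < t ∧ p ∈ U t) (hc : 0 ≤ c) :
    hittingLevel U p ≤ c ↔ ∀ t, c < t → p ∈ U t :=
  ⟨fun h _ hct => mem_of_hittingLevel_lt hmono hp (h.trans_lt hct),
    fun h => le_of_forall_gt_imp_ge_of_dense fun _ hct => hittingLevel_le (hc.trans_lt hct) (h _ hct)⟩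

theorem hittingLevel_eq_zero_iff (hmono : ∀ s t, 0 < s → s < t → U s ⊆ U t)
    (hp : ∃ t, 0 < t ∧ p ∈ U t) : hittingLevel U p = 0 ↔ ∀ t, 0 < t → p ∈ U t := by
  rw [← hittingLevel_le_iff hmono hp le_rfl]
  exact ⟨le_of_eq, fun h => h.antisymm (hittingLevel_nonneg U p)⟩

end Order

section Topology

variable {α : Type*} [TopologicalSpace α] {U : ℝ → Set α} {S : Set α}

theorem subset_of_closure_inter_subset {s t : Set α} (hs : s ⊆ S) (h : closure s ∩ S ⊆ t) :
    s ⊆ t :=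
  fun _ hp => h ⟨subset_closure hp, hs hp⟩

theorem eventually_hittingLevel_lt (hopen : ∀ t, 0 < t → ∃ V, IsOpen V ∧ U t = V ∩ S)
    (hmono : ∀ s t, 0 < s → s < t → U s ⊆ U t) {p : α} (hp : ∃ t, 0 < t ∧ p ∈ U t) {t : ℝ}
    (h : hittingLevel U p < t) : ∀ᶠ q in 𝓝[S] p, hittingLevel U q < t := by
  obtain ⟨t', hpt', ht't⟩ := exists_between h
  have ht' : 0 < t' := (hittingLevel_nonneg U p).trans_lt hpt'
  obtain ⟨V, hV, hUV⟩ := hopen t' ht'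
  have hpV : p ∈ V := (hUV ▸ mem_of_hittingLevel_lt hmono hp hpt').1
  filter_upwards [inter_mem_nhdsWithin S (hV.mem_nhds hpV)] with q hq
  exact (hittingLevel_le ht' (hUV ▸ hq.symm)).trans_lt ht't

theorem eventually_lt_hittingLevel (hcl : ∀ s t, 0 < s → s < t → closure (U s) ∩ S ⊆ U t)
    (hmono : ∀ s t, 0 < s → s < t → U s ⊆ U t) (hcover : ∀ q ∈ S, ∃ t, 0 < t ∧ q ∈ U t)
    {p : α} (hp : p ∈ S) {s : ℝ} (h : s < hittingLevel U p) :
    ∀ᶠ q in 𝓝[S] p, s < hittingLevel U q := by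
  rcases lt_or_ge s 0 with hs | hs
  · exact Eventually.of_forall fun q => hs.trans_le (hittingLevel_nonneg U q)
  obtain ⟨s', hss', hs'p⟩ := exists_between h
  obtain ⟨s'', hs's'', hs''p⟩ := exists_between hs'p
  have hs' : 0 < s' := hs.trans_lt hss'
  have hpcl : p ∉ closure (U s') := fun hpcl =>
    (hittingLevel_le (hs'.trans hs's'') (hcl s' s'' hs' hs's'' ⟨hpcl, hp⟩)).not_gt hs''p
  filter_upwards [self_mem_nhdsWithin, nhdsWithin_le_nhds
    (isClosed_closure.isOpen_compl.mem_nhds hpcl)] with q hqS hqcl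
  refine hss'.trans_le (not_lt.1 fun hqs' => hqcl ?_)
  exact subset_closure (mem_of_hittingLevel_lt hmono (hcover q hqS) hqs')

theorem continuousOn_hittingLevel (hopen : ∀ t, 0 < t → ∃ V, IsOpen V ∧ U t = V ∩ S)
    (hcl : ∀ s t, 0 < s → s < t → closure (U s) ∩ S ⊆ U t)
    (hmono : ∀ s t, 0 < s → s < t → U s ⊆ U t) (hcover : ∀ q ∈ S, ∃ t, 0 < t ∧ q ∈ U t) :
    ContinuousOn (hittingLevel U) S := fun p hp =>
  tendsto_order.2 ⟨fun _ h => eventually_lt_hittingLevel hcl hmono hcover hp h,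
    fun _ h => eventually_hittingLevel_lt hopen hmono (hcover p hp) h⟩

end Topology

theorem convex_setOf_hittingLevel_le {X Y : Type*} [AddCommGroup Y] [Module ℝ Y]
    {U : ℝ → Set (X × Y)} {S : Set (X × Y)} (hsub : ∀ t, 0 < t → U t ⊆ S)
    (hmono : ∀ s t, 0 < s → s < t → U s ⊆ U t) (hcover : ∀ q ∈ S, ∃ t, 0 < t ∧ q ∈ U t)
    (hconv : ∀ t, 0 < t → ∀ x, Convex ℝ {y | (x, y) ∈ U t}) (x : X) (c : ℝ) :
    Convex ℝ {y | (x, y) ∈ S ∧ hittingLevel U (x, y) ≤ c} := by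
  rcases lt_or_ge c 0 with hc | hc
  · convert convex_empty (𝕜 := ℝ) (E := Y)
    exact eq_empty_of_forall_notMem fun y hy =>
      (hittingLevel_nonneg U (x, y)).not_gt (hy.2.trans_lt hc)
  · have hsection : {y | (x, y) ∈ S ∧ hittingLevel U (x, y) ≤ c} =
        ⋂ (t : ℝ) (_ : c < t), {y | (x, y) ∈ U t} := by
      ext y
      simp only [mem_ofPred_eq, mem_iInter]
      refine ⟨fun ⟨hS, hτ⟩ => (hittingLevel_le_iff hmono (hcover _ hS) hc).1 hτ, fun h => ?_⟩
      have hS : (x, y) ∈ S := hsub (c + 1) (by linarith) (h _ (by linarith))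
      exact ⟨hS, (hittingLevel_le_iff hmono (hcover _ hS) hc).2 h⟩
    rw [hsection]
    exact convex_iInter₂ fun t hct => hconv t (hc.trans_lt hct) x

theorem inverse_maximum_urysohn_family_convex_general
    {X Y : Type*} [TopologicalSpace X]
    [AddCommGroup Y] [Module ℝ Y] [TopologicalSpace Y]
    (K M : X → Set Y)
    (hMne : ∀ x, (M x).Nonempty) (hMK : ∀ x, M x ⊆ K x)
    (U : ℝ → Set (X × Y))
    (hUsub : ∀ t : ℝ, 0 < t → U t ⊆ corrGraph K)
    (hUopen : ∀ t : ℝ, 0 < t → ∃ V : Set (X × Y), IsOpen V ∧ U t = V ∩ corrGraph K)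
    (hUnion : (⋃ (t : ℝ) (_ : 0 < t), U t) = corrGraph K)
    (hUcl : ∀ s t : ℝ, 0 < s → s < t → closure (U s) ∩ corrGraph K ⊆ U t)
    (hInter : corrGraph M = ⋂ (t : ℝ) (_ : 0 < t), U t)
    (hUconv : ∀ t : ℝ, 0 < t → ∀ x : X, Convex ℝ {y : Y | (x, y) ∈ U t}) :
    ∃ θ : X × Y → ℝ, ContinuousOn θ (corrGraph K) ∧
      (∀ p ∈ corrGraph K, θ p ∈ Icc (0 : ℝ) 1) ∧
      corrGraph M = {p ∈ corrGraph K | θ p = sSup ((fun z => θ (p.1, z)) '' K p.1)} ∧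
      ∀ x : X, ∀ s : ℝ, 0 < s →
        Convex ℝ {y : Y | (x, y) ∈ corrGraph K ∧ s ≤ θ (x, y)} := by
  have hmono : ∀ s t, 0 < s → s < t → U s ⊆ U t := fun s t hs hst =>
    subset_of_closure_inter_subset (hUsub s hs) (hUcl s t hs hst)
  have hcover : ∀ p ∈ corrGraph K, ∃ t, 0 < t ∧ p ∈ U t := by
    intro p hp
    rw [← hUnion] at hp
    simpa using hp
  have hM : ∀ p, p ∈ corrGraph M ↔ p ∈ corrGraph K ∧ hittingLevel U p = 0 := fun p => by
    rw [hInter, mem_iInter₂]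
    exact ⟨fun h => have hK := hUsub 1 one_pos (h 1 one_pos)
      ⟨hK, (hittingLevel_eq_zero_iff hmono (hcover p hK)).2 h⟩,
      fun ⟨hK, h0⟩ => (hittingLevel_eq_zero_iff hmono (hcover p hK)).1 h0⟩
  have hθle : ∀ p, Real.exp (-hittingLevel U p) ≤ 1 := fun p =>
    Real.exp_le_one_iff.2 (neg_nonpos.2 (hittingLevel_nonneg U p))
  have hsup : ∀ x, sSup ((fun z => Real.exp (-hittingLevel U (x, z))) '' K x) = 1 := fun x => by
    obtain ⟨z, hz⟩ := hMne x
    refine IsGreatest.csSup_eq ⟨⟨z, hMK x hz, by simp [((hM (x, z)).1 hz).2]⟩, ?_⟩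
    rintro _ ⟨y, -, rfl⟩
    exact hθle _
  refine ⟨fun p => Real.exp (-hittingLevel U p),
    (continuousOn_hittingLevel hUopen hUcl hmono hcover).neg.rexp,
    fun p _ => ⟨(Real.exp_pos _).le, hθle p⟩, ?_, fun x s hs => ?_⟩
  · ext p
    rw [hM, mem_sep_iff, hsup, Real.exp_eq_one_iff, neg_eq_zero]
  · convert convex_setOf_hittingLevel_le hUsub hmono hcover hUconv x (-Real.log s) using 4
    rw [← Real.log_le_iff_le_exp hs, le_neg]

/-- Inverse maximum theorem with convex sections: if in addition every section
`{y : (x,y) ∈ U t}` is convex, the function `θ` can be chosen so that its superlevel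
sets in the second variable (within `gra K`) are convex. -/
theorem inverse_maximum_urysohn_family_convex
    {X Y : Type*} [TopologicalSpace X] [T2Space X]
    [AddCommGroup Y] [Module ℝ Y] [TopologicalSpace Y] [T2Space Y]
    (K M : X → Set Y)
    (hMne : ∀ x, (M x).Nonempty) (hMK : ∀ x, M x ⊆ K x)
    (U : ℝ → Set (X × Y))
    (hUsub : ∀ t : ℝ, 0 < t → U t ⊆ corrGraph K)
    (hUopen : ∀ t : ℝ, 0 < t → ∃ V : Set (X × Y), IsOpen V ∧ U t = V ∩ corrGraph K)
    (hUnion : (⋃ (t : ℝ) (_ : 0 < t), U t) = corrGraph K)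
    (hUcl : ∀ s t : ℝ, 0 < s → s < t → closure (U s) ∩ corrGraph K ⊆ U t)
    (hInter : corrGraph M = ⋂ (t : ℝ) (_ : 0 < t), U t)
    (hUconv : ∀ t : ℝ, 0 < t → ∀ x : X, Convex ℝ {y : Y | (x, y) ∈ U t}) :
    ∃ θ : X × Y → ℝ, ContinuousOn θ (corrGraph K) ∧
      (∀ p ∈ corrGraph K, θ p ∈ Icc (0 : ℝ) 1) ∧
      corrGraph M = {p ∈ corrGraph K | θ p = sSup ((fun z => θ (p.1, z)) '' K p.1)} ∧
      ∀ x : X, ∀ s : ℝ, 0 < s →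
        Convex ℝ {y : Y | (x, y) ∈ corrGraph K ∧ s ≤ θ (x, y)} :=
  inverse_maximum_urysohn_family_convex_general K M hMne hMK U hUsub hUopen hUnion hUcl hInter
    hUconv
end

section
/- Let X and Y be real normed spaces, D a nonempty convex subset of X, and M : D ⇉ Y a correspondence with nonempty values whose graph gra(M) is a convex subset of X × Y and is closed in D × Y (with the subspace topology of X × Y). Then there exists a continuous function θ : D × Y → [0,1] such that (i) gra(M) = {(x,y) ∈ D × Y : θ(x,y) = sup_{z ∈ Y} θ(x,z)}, and (ii) for every x ∈ D, the function θ(x,·) : Y → [0,1] is quasi-concave. -/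
/-!
The witness is `θ p = max 0 (1 - d(p, gra M))`. It equals `1` exactly on the closure of the
graph, which inside `D × Y` is the graph itself, and `1` is the supremum of every slice
`θ (x, ·)` since `M x` is nonempty. Convexity of the graph makes its closed thickenings
convex, so `p ↦ d(p, gra M)` is quasi-convex and `θ`, an antitone function of it, is
quasi-concave, hence so is each slice.
-/

open Set Metric

theorem Metric.mem_cthickening_iff_infDist_le {α : Type*} [PseudoMetricSpace α] {s : Set α}
    (hs : s.Nonempty) {x : α} {δ : ℝ} (hδ : 0 ≤ δ) :
    x ∈ cthickening δ s ↔ infDist x s ≤ δ := by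
  rw [mem_cthickening_iff, infDist, ENNReal.le_ofReal_iff_toReal_le (infEDist_ne_top hs) hδ]

theorem Convex.quasiconvexOn_infDist {E : Type*} [SeminormedAddCommGroup E] [NormedSpace ℝ E]
    {s : Set E} (hs : Convex ℝ s) (hne : s.Nonempty) :
    QuasiconvexOn ℝ univ (infDist · s) := by
  refine convex_univ.quasiconvexOn_of_convex_le fun r => ?_
  rcases lt_or_ge r 0 with hr | hr
  · convert convex_empty (𝕜 := ℝ) (E := E)
    exact eq_empty_of_forall_notMem fun x hx => hr.not_ge (infDist_nonneg.trans hx)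
  · convert hs.cthickening r using 1
    ext x
    exact (mem_cthickening_iff_infDist_le hne hr).symm

theorem QuasiconcaveOn.convex_slice_ge {𝕜 E F β : Type*} [Ring 𝕜] [PartialOrder 𝕜]
    [IsOrderedRing 𝕜] [AddCommGroup E] [Module 𝕜 E] [AddCommGroup F] [Module 𝕜 F] [Preorder β]
    {f : E × F → β} (hf : QuasiconcaveOn 𝕜 univ f) (x : E) (r : β) :
    Convex 𝕜 {y | r ≤ f (x, y)} := by
  simpa using (hf r).affine_preimage ((AffineMap.const 𝕜 F x).prod (AffineMap.id 𝕜 F))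

section Proximity

variable {α : Type*} [PseudoMetricSpace α]

noncomputable def proximity (s : Set α) (p : α) : ℝ :=
  max 0 (1 - infDist p s)

theorem continuous_proximity (s : Set α) : Continuous (proximity s) :=
  continuous_const.max (continuous_const.sub (continuous_infDist_pt s))

theorem proximity_le_one (s : Set α) (p : α) : proximity s p ≤ 1 :=
  max_le zero_le_one (sub_le_self 1 infDist_nonneg)

theorem proximity_mem_Icc (s : Set α) (p : α) : proximity s p ∈ Icc (0 : ℝ) 1 :=
  ⟨le_max_left _ _, proximity_le_one s p⟩

theorem proximity_eq_one_iff {s : Set α} (hs : s.Nonempty) {p : α} :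
    proximity s p = 1 ↔ p ∈ closure s := by
  rw [mem_closure_iff_infDist_zero hs, proximity]
  constructor
  · intro h
    have := infDist_nonneg (x := p) (s := s)
    rcases max_choice 0 (1 - infDist p s) with h' | h' <;> rw [h'] at h <;> linarith
  · intro h
    simp [h]

theorem proximity_eq_one_of_mem {s : Set α} {p : α} (hp : p ∈ s) : proximity s p = 1 :=
  (proximity_eq_one_iff ⟨p, hp⟩).2 (subset_closure hp)

theorem sSup_range_proximity_prodMk {β : Type*} [PseudoMetricSpace β] {s : Set (α × β)}
    {x : α} {y : β} (hy : (x, y) ∈ s) : sSup (range fun z => proximity s (x, z)) = 1 :=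
  IsGreatest.csSup_eq ⟨⟨y, proximity_eq_one_of_mem hy⟩,
    forall_mem_range.2 fun z => proximity_le_one s (x, z)⟩

theorem Convex.quasiconcaveOn_proximity {E : Type*} [SeminormedAddCommGroup E]
    [NormedSpace ℝ E] {s : Set E} (hs : Convex ℝ s) (hne : s.Nonempty) :
    QuasiconcaveOn ℝ univ (proximity s) :=
  (hs.quasiconvexOn_infDist hne).antitone_comp (g := fun t : ℝ => max 0 (1 - t))
    fun _ _ h => max_le_max le_rfl (sub_le_sub_left h 1)

end Proximity

theorem inverse_maximum_convex_graph_general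
    {X Y : Type*} [NormedAddCommGroup X] [NormedSpace ℝ X]
    [NormedAddCommGroup Y] [NormedSpace ℝ Y]
    (D : Set X)
    (M : X → Set Y) (hMne : ∀ x ∈ D, (M x).Nonempty)
    (hgraconv : Convex ℝ {p : X × Y | p.1 ∈ D ∧ p.2 ∈ M p.1})
    (hgraclosed : closure {p : X × Y | p.1 ∈ D ∧ p.2 ∈ M p.1} ∩ D ×ˢ (univ : Set Y) ⊆
      {p : X × Y | p.1 ∈ D ∧ p.2 ∈ M p.1}) :
    ∃ θ : X × Y → ℝ, ContinuousOn θ (D ×ˢ (univ : Set Y)) ∧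
      (∀ p ∈ D ×ˢ (univ : Set Y), θ p ∈ Icc (0 : ℝ) 1) ∧
      {p : X × Y | p.1 ∈ D ∧ p.2 ∈ M p.1} =
        {p ∈ D ×ˢ (univ : Set Y) | θ p = sSup (range fun z => θ (p.1, z))} ∧
      ∀ x ∈ D, ∀ c : ℝ, Convex ℝ {y : Y | c ≤ θ (x, y)} := by
  set G : Set (X × Y) := {p : X × Y | p.1 ∈ D ∧ p.2 ∈ M p.1}
  have mem_graph_of_mem (x : X) (hx : x ∈ D) : ∃ y, (x, y) ∈ G :=
    (hMne x hx).imp fun _ hy => ⟨hx, hy⟩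
  refine ⟨proximity G, (continuous_proximity G).continuousOn,
    fun p _ => proximity_mem_Icc G p, ?_, fun x hx c => ?_⟩
  · ext ⟨x, y⟩
    constructor
    · intro hp
      exact ⟨⟨hp.1, trivial⟩, by rw [sSup_range_proximity_prodMk hp, proximity_eq_one_of_mem hp]⟩
    · rintro ⟨⟨hx, -⟩, hmax⟩
      obtain ⟨y₀, hy₀⟩ := mem_graph_of_mem x hx
      rw [sSup_range_proximity_prodMk hy₀, proximity_eq_one_iff ⟨_, hy₀⟩] at hmax
      exact hgraclosed ⟨hmax, hx, trivial⟩
  · obtain ⟨y₀, hy₀⟩ := mem_graph_of_mem x hx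
    exact (hgraconv.quasiconcaveOn_proximity ⟨_, hy₀⟩).convex_slice_ge x c

/-- Inverse maximum theorem for correspondences with convex closed graph on normed
spaces: if `M : D ⇉ Y` has nonempty values, its graph is convex and closed in the
subspace `D × Y`, then there is a continuous `θ : D × Y → [0,1]` realizing `M` as the
argmax correspondence over `Y`, with `θ (x, ·)` quasi-concave for every `x ∈ D`. -/
theorem inverse_maximum_convex_graph
    {X Y : Type*} [NormedAddCommGroup X] [NormedSpace ℝ X]
    [NormedAddCommGroup Y] [NormedSpace ℝ Y]
    (D : Set X) (hDne : D.Nonempty) (hDconv : Convex ℝ D)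
    (M : X → Set Y) (hMne : ∀ x ∈ D, (M x).Nonempty)
    (hgraconv : Convex ℝ {p : X × Y | p.1 ∈ D ∧ p.2 ∈ M p.1})
    (hgraclosed : closure {p : X × Y | p.1 ∈ D ∧ p.2 ∈ M p.1} ∩ D ×ˢ (univ : Set Y) ⊆
      {p : X × Y | p.1 ∈ D ∧ p.2 ∈ M p.1}) :
    ∃ θ : X × Y → ℝ, ContinuousOn θ (D ×ˢ (univ : Set Y)) ∧
      (∀ p ∈ D ×ˢ (univ : Set Y), θ p ∈ Icc (0 : ℝ) 1) ∧
      {p : X × Y | p.1 ∈ D ∧ p.2 ∈ M p.1} =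
        {p ∈ D ×ˢ (univ : Set Y) | θ p = sSup (range fun z => θ (p.1, z))} ∧
      ∀ x ∈ D, ∀ c : ℝ, Convex ℝ {y : Y | c ≤ θ (x, y)} :=
  inverse_maximum_convex_graph_general D M hMne hgraconv hgraclosed
end

section
/- Let X be a nonempty paracompact Hausdorff topological space, E a Hausdorff locally convex real topological vector space, Y a nonempty convex compact subset of E, and M : X ⇉ Y an upper semicontinuous correspondence with nonempty convex compact values. Then the following two conditions are equivalent: (i) there exists a continuous function θ : X × Y → [0,1] such that gra(M) = {(x,y) ∈ X × Y : θ(x,y) = sup_{z ∈ Y} θ(x,z)} and for each x ∈ X the function θ(x,·) : Y → [0,1] is quasi-concave; (ii) gra(M) is a Gδ subset of X × Y. -/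
/-!
(ii) ⇒ (i). For an open `U ⊇ gra M`, near each `x₀` the compact set `{y ∈ Y | (x₀, y) ∉ U}` is
separated from the closed convex set `M x₀` by finitely many closed half-spaces (Hahn–Banach).
Upper semicontinuity keeps `M x` strictly inside their intersection `P` for `x` near `x₀`, and the
tube lemma keeps `P` inside the slices of `U`; so a continuous quasi-concave function of `y` equal
to `1` exactly on `P` works locally. These local caps are glued over a partition of unity, and
countably many of the glued functions `ψₙ` are combined into `θ = ⨅ n, max ψₙ (1 - 2⁻ⁿ)`,
which is continuous, quasi-concave in `y`, and equal to its maximum `1` exactly on `gra M`.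

(i) ⇒ (ii). By compactness of `Y`, `m x = sup_{z ∈ Y} θ (x, z)` is continuous, so
`gra M = {θ - m ∘ fst ≥ 0}` is a relative `Gδ` in `X × Y`.
-/

open Set Filter Topology

section Infima

variable {ι α β : Type*}

theorem ciInf_max_eq_iff [ConditionallyCompleteLinearOrder β] [Nonempty ι] {a b : ι → β} {c : β}
    (ha : ∀ i, a i ≤ c) (hb : ∀ i, b i ≤ c) (hbdd : BddBelow (range b)) :
    ⨅ i, max (a i) (b i) = c ↔ ∀ i, b i < c → a i = c := by
  obtain ⟨m, hm⟩ := hbdd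
  have hbdd' : BddBelow (range fun i => max (a i) (b i)) :=
    ⟨m, forall_mem_range.2 fun i => (hm ⟨i, rfl⟩).trans (le_max_right _ _)⟩
  constructor
  · intro h i hi
    have : c ≤ max (a i) (b i) := h ▸ ciInf_le hbdd' i
    exact le_antisymm (ha i) ((le_max_iff.1 this).resolve_right hi.not_ge)
  · intro h
    refine le_antisymm ((ciInf_le hbdd' (Classical.arbitrary ι)).trans (max_le (ha _) (hb _)))
      (le_ciInf fun i => ?_)
    rcases (hb i).lt_or_eq with hi | hi
    · exact (h i hi).ge.trans (le_max_left _ _)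
    · exact hi.ge.trans (le_max_right _ _)

theorem QuasiconcaveOn.ciInf {𝕜 E : Type*} [Semiring 𝕜] [PartialOrder 𝕜] [AddCommMonoid E]
    [SMul 𝕜 E] [ConditionallyCompleteLattice β] [Nonempty ι] {s : Set E} {f : ι → E → β}
    (hf : ∀ i, QuasiconcaveOn 𝕜 s (f i)) (hbdd : ∀ x, BddBelow (range fun i => f i x)) :
    QuasiconcaveOn 𝕜 s fun x => ⨅ i, f i x := by
  intro r
  have : {x ∈ s | r ≤ ⨅ i, f i x} = ⋂ i, {x ∈ s | r ≤ f i x} := by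
    ext x
    simp only [mem_ofPred_eq, mem_iInter, le_ciInf_iff (hbdd x)]
    exact ⟨fun h i => ⟨h.1, h.2 i⟩, fun h => ⟨(h (Classical.arbitrary ι)).1, fun i => (h i).2⟩⟩
  exact this ▸ convex_iInter fun i => hf i r

variable [TopologicalSpace α]

theorem LocallyFinite.continuous_ciInf [ConditionallyCompleteLinearOrder β] [TopologicalSpace β]
    [OrderClosedTopology β] {f : ι → α → β} {c : β} (hf : LocallyFinite fun i => {x | f i x ≠ c})
    (hc : ∀ i, Continuous (f i)) (hle : ∀ i x, f i x ≤ c) : Continuous fun x => ⨅ i, f i x := by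
  classical
  rcases isEmpty_or_nonempty ι with hι | hι
  · have : ∀ x, ⨅ i, f i x = ⨅ i : ι, c := fun x => congrArg iInf (funext isEmptyElim)
    simpa only [this] using continuous_const
  have i₀ : ι := Classical.arbitrary ι
  refine continuous_iff_continuousAt.2 fun x₀ => ?_
  obtain ⟨N, hN, hfin⟩ := hf x₀
  set s := insert i₀ hfin.toFinset
  have hs : s.Nonempty := Finset.insert_nonempty _ _
  have hlow : ∀ x ∈ N, ∀ i, s.inf' hs (f · x) ≤ f i x := by
    intro x hx i
    by_cases hi : i ∈ s
    · exact Finset.inf'_le _ hi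
    · have : f i x = c := by
        by_contra h
        exact hi (Finset.mem_insert_of_mem (hfin.mem_toFinset.2 ⟨x, h, hx⟩))
      exact this ▸ (Finset.inf'_le _ (Finset.mem_insert_self _ _)).trans (hle i₀ x)
  have heq : ∀ x ∈ N, ⨅ i, f i x = s.inf' hs (f · x) := fun x hx =>
    le_antisymm (Finset.le_inf' _ _ fun i _ => ciInf_le ⟨_, forall_mem_range.2 (hlow x hx)⟩ i)
      (le_ciInf (hlow x hx))
  exact (Continuous.finset_inf'_apply hs fun i _ => hc i).continuousAt.congr
    (eventually_of_mem hN fun x hx => (heq x hx).symm)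

theorem continuous_ciInf_max_of_tendsto {f : ℕ → α → ℝ} {c : ℕ → ℝ} {L : ℝ}
    (hf : ∀ n, Continuous (f n)) (hfL : ∀ n x, f n x ≤ L) (hc : Monotone c)
    (hcL : Tendsto c atTop (𝓝 L)) : Continuous fun x => ⨅ n, max (f n x) (c n) := by
  have hbdd : ∀ x, BddBelow (range fun n => max (f n x) (c n)) := fun x =>
    ⟨c 0, forall_mem_range.2 fun n => (hc n.zero_le).trans (le_max_right _ _)⟩
  have hterm : ∀ n, Continuous fun x => max (f n x) (c n) := fun n => (hf n).max continuous_const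
  refine continuous_iff_continuousAt.2 fun x => tendsto_order.2 ⟨fun a ha => ?_, fun b hb => ?_⟩
  · obtain ⟨a', haa', ha'⟩ := exists_between ha
    have ha'L : a' < L :=
      ha'.trans_le ((ciInf_le (hbdd x) 0).trans (max_le (hfL 0 x) (hc.ge_of_tendsto hcL 0)))
    obtain ⟨N, hN⟩ := (hcL.eventually (lt_mem_nhds ha'L)).exists
    have hnear : ∀ᶠ y in 𝓝 x, ∀ n ∈ Finset.range N, a' < max (f n y) (c n) :=
      (eventually_all_finset _).2 fun n _ =>
        (hterm n).continuousAt.eventually (lt_mem_nhds (ha'.trans_le (ciInf_le (hbdd x) n)))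
    filter_upwards [hnear] with y hy
    refine haa'.trans_le (le_ciInf fun n => ?_)
    rcases lt_or_ge n N with hn | hn
    · exact (hy n (Finset.mem_range.2 hn)).le
    · exact (hN.trans_le (hc hn)).le.trans (le_max_right _ _)
  · obtain ⟨n, hn⟩ := exists_lt_of_ciInf_lt hb
    filter_upwards [(hterm n).continuousAt.eventually (gt_mem_nhds hn)] with y hy
    exact (ciInf_le (hbdd y) n).trans_lt hy

theorem ContinuousOn.exists_isOpen_inter_eq_nonneg {f : α → ℝ} {s : Set α}
    (hf : ContinuousOn f s) :
    ∃ U : ℕ → Set α, (∀ n, IsOpen (U n)) ∧ {p ∈ s | 0 ≤ f p} = s ∩ ⋂ n, U n := by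
  choose U hU hUf using fun n : ℕ => continuousOn_iff'.1 hf (Ioi (-(1 / (n + 1 : ℝ)))) isOpen_Ioi
  refine ⟨U, hU, ext fun p => and_congr_right fun hp => ?_⟩
  have hmem : ∀ n, p ∈ U n ↔ -(1 / (n + 1 : ℝ)) < f p := fun n => by
    simpa [hp] using (congrArg (p ∈ ·) (hUf n)).symm
  simp only [mem_iInter, hmem]
  refine ⟨fun h n => (neg_neg_of_pos Nat.one_div_pos_of_nat).trans_le h, fun h => ?_⟩
  by_contra! hneg
  obtain ⟨n, hn⟩ := exists_nat_one_div_lt (neg_pos.2 hneg)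
  linarith [h n]

end Infima

section Combination

variable {X E : Type*} [TopologicalSpace X] [TopologicalSpace E] [AddCommMonoid E] [SMul ℝ E]

theorem exists_quasiconcave_eq_one_iff_forall {ψ : ℕ → X × E → ℝ} (hψc : ∀ n, Continuous (ψ n))
    (hψ1 : ∀ n p, ψ n p ≤ 1) (hψq : ∀ n x, QuasiconcaveOn ℝ univ fun y => ψ n (x, y)) :
    ∃ θ : X × E → ℝ, Continuous θ ∧ (∀ p, θ p ∈ Icc (0 : ℝ) 1) ∧
      (∀ x, QuasiconcaveOn ℝ univ fun y => θ (x, y)) ∧ ∀ p, θ p = 1 ↔ ∀ n, ψ n p = 1 := by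
  set c : ℕ → ℝ := fun n => 1 - 2⁻¹ ^ n
  have hc_mono : Monotone c := fun m n h =>
    sub_le_sub_left (pow_le_pow_of_le_one (by norm_num) (by norm_num) h) 1
  have hc_lim : Tendsto c atTop (𝓝 1) := by
    simpa only [sub_zero] using (tendsto_pow_atTop_nhds_zero_of_lt_one
      (by norm_num : (0 : ℝ) ≤ 2⁻¹) (by norm_num)).const_sub 1
  have hc_lt : ∀ n, c n < 1 := fun n => sub_lt_self _ (by positivity)
  have hc_nonneg : ∀ n, 0 ≤ c n := fun n => by simpa [c] using hc_mono n.zero_le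
  have hbdd : ∀ p, BddBelow (range fun n => max (ψ n p) (c n)) := fun p =>
    ⟨0, forall_mem_range.2 fun n => (hc_nonneg n).trans (le_max_right _ _)⟩
  refine ⟨fun p => ⨅ n, max (ψ n p) (c n), continuous_ciInf_max_of_tendsto hψc hψ1 hc_mono hc_lim,
    fun p => ⟨le_ciInf fun n => (hc_nonneg n).trans (le_max_right _ _),
      (ciInf_le (hbdd p) 0).trans (max_le (hψ1 0 p) (hc_lt 0).le)⟩,
    fun x => QuasiconcaveOn.ciInf (fun n => (hψq n x).monotone_comp (g := (max · (c n)))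
      (monotone_id.max monotone_const)) fun y => hbdd (x, y), fun p => ?_⟩
  rw [ciInf_max_eq_iff (hψ1 · p) (fun n => (hc_lt n).le) ⟨0, forall_mem_range.2 hc_nonneg⟩]
  exact forall_congr' fun n => ⟨fun h => h (hc_lt n), fun h _ => h⟩

end Combination

section Argmax

variable {X E : Type*} [TopologicalSpace X] [TopologicalSpace E] {Y : Set E}

theorem continuous_sSup_image_of_continuousOn {θ : X × E → ℝ} (hY : IsCompact Y)
    (hθ : ContinuousOn θ ((univ : Set X) ×ˢ Y)) :
    Continuous fun x => sSup ((fun z => θ (x, z)) '' Y) := by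
  have : CompactSpace Y := isCompact_iff_compactSpace.1 hY
  have hθY : Continuous fun q : X × Y => θ (q.1, q.2) :=
    hθ.comp_continuous (by fun_prop) fun q => ⟨trivial, q.2.2⟩
  have himg : ∀ x, (fun z => θ (x, z)) '' Y = (fun z : Y => θ (x, z)) '' univ := fun x => by
    rw [image_univ, image_eq_range]
  simpa only [himg] using isCompact_univ.continuous_sSup (f := fun x (z : Y) => θ (x, z)) hθY

theorem exists_isOpen_argmax_eq_inter_iInter {θ : X × E → ℝ} (hY : IsCompact Y)
    (hθ : ContinuousOn θ ((univ : Set X) ×ˢ Y)) :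
    ∃ U : ℕ → Set (X × E), (∀ n, IsOpen (U n)) ∧
      {p ∈ (univ : Set X) ×ˢ Y | θ p = sSup ((fun z => θ (p.1, z)) '' Y)} =
        ((univ : Set X) ×ˢ Y) ∩ ⋂ n, U n := by
  have hle : ∀ p ∈ (univ : Set X) ×ˢ Y, θ p ≤ sSup ((fun z => θ (p.1, z)) '' Y) := fun p hp =>
    le_csSup (hY.bddAbove_image (hθ.comp (continuousOn_const.prodMk continuousOn_id)
      fun z hz => ⟨trivial, hz⟩)) ⟨p.2, hp.2, rfl⟩
  obtain ⟨U, hU, hUeq⟩ := (hθ.sub ((continuous_sSup_image_of_continuousOn hY hθ).comp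
    continuous_fst).continuousOn).exists_isOpen_inter_eq_nonneg
  refine ⟨U, hU, hUeq ▸ ext fun p => and_congr_right fun hp => ?_⟩
  rw [Pi.sub_apply, sub_nonneg]
  exact ⟨ge_of_eq, (hle p hp).antisymm⟩

end Argmax

section PolyhedralCap

variable {E : Type*} [AddCommGroup E] [Module ℝ E] [TopologicalSpace E]

noncomputable def polyhedralCap (T : Finset (StrongDual ℝ E × ℝ)) (hT : T.Nonempty) (y : E) : ℝ :=
  1 - max 0 (T.sup' hT fun q => q.1 y - q.2)

variable (T : Finset (StrongDual ℝ E × ℝ)) (hT : T.Nonempty)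

theorem continuous_polyhedralCap : Continuous (polyhedralCap T hT) :=
  continuous_const.sub (continuous_const.max
    (Continuous.finset_sup'_apply hT fun q _ => q.1.continuous.sub continuous_const))

theorem polyhedralCap_le_one (y : E) : polyhedralCap T hT y ≤ 1 :=
  sub_le_self _ (le_max_left _ _)

theorem polyhedralCap_eq_one_iff {y : E} : polyhedralCap T hT y = 1 ↔ ∀ q ∈ T, q.1 y ≤ q.2 := by
  simp [polyhedralCap, Finset.sup'_le_iff]

theorem quasiconcaveOn_polyhedralCap : QuasiconcaveOn ℝ univ (polyhedralCap T hT) := by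
  have hsup : QuasiconvexOn ℝ univ fun y => T.sup' hT fun q => q.1 y - q.2 := fun r => by
    have : {y ∈ univ | (T.sup' hT fun q => q.1 y - q.2) ≤ r} = ⋂ q ∈ T, {y | q.1 y ≤ r + q.2} := by
      ext y
      simp [Finset.sup'_le_iff]
    exact this ▸ convex_iInter₂ fun q _ => convex_halfSpace_le q.1.toLinearMap.isLinear _
  exact hsup.antitone_comp (g := fun t => 1 - max 0 t) fun a b hab =>
    sub_le_sub_left (max_le_max_left 0 hab) 1

end PolyhedralCap

theorem exists_finset_separating_of_isCompact {E : Type*} [AddCommGroup E] [Module ℝ E]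
    [TopologicalSpace E] [IsTopologicalAddGroup E] [ContinuousSMul ℝ E] [LocallyConvexSpace ℝ E]
    {C K : Set E} (hCconv : Convex ℝ C) (hCclosed : IsClosed C) (hK : IsCompact K)
    (hCK : Disjoint C K) :
    ∃ T : Finset (StrongDual ℝ E × ℝ), T.Nonempty ∧ (∀ q ∈ T, ∀ a ∈ C, q.1 a < q.2) ∧
      ∀ k ∈ K, ∃ q ∈ T, q.2 < q.1 k := by
  classical
  have hsep : ∀ k ∈ K, ∃ q : StrongDual ℝ E × ℝ, (∀ a ∈ C, q.1 a < q.2) ∧ q.2 < q.1 k :=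
    fun k hk =>
      let ⟨f, u, hfC, hfk⟩ :=
        geometric_hahn_banach_closed_point hCconv hCclosed (hCK.notMem_of_mem_right hk)
      ⟨(f, u), hfC, hfk⟩
  choose! q hqC hqk using hsep
  obtain ⟨t, htK, ht, hKt⟩ :=
    hK.elim_finite_subcover_image (c := fun k => {y | (q k).2 < (q k).1 y})
      (fun k _ => isOpen_lt continuous_const (q k).1.continuous)
      fun k hk => mem_biUnion hk (hqk k hk)
  -- `(0, 1)` only makes the family nonempty.
  refine ⟨insert (0, 1) (ht.toFinset.image q), Finset.insert_nonempty _ _, ?_, fun k hk => ?_⟩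
  · simp only [Finset.forall_mem_insert, Finset.forall_mem_image, Set.Finite.mem_toFinset]
    exact ⟨fun _ _ => zero_lt_one, fun k hk => hqC k (htK hk)⟩
  · obtain ⟨j, hj, hkj⟩ := mem_iUnion₂.1 (hKt hk)
    exact ⟨q j, Finset.mem_insert_of_mem (Finset.mem_image_of_mem _ (ht.mem_toFinset.2 hj)), hkj⟩

section Correspondence

variable {X E : Type*} [TopologicalSpace X] [AddCommGroup E] [Module ℝ E] [TopologicalSpace E]
  [IsTopologicalAddGroup E] [ContinuousSMul ℝ E] [LocallyConvexSpace ℝ E]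
  {Y : Set E} {M : X → Set E}

theorem exists_local_cap (hY : IsCompact Y) (hMconv : ∀ x, Convex ℝ (M x))
    (hMclosed : ∀ x, IsClosed (M x))
    (hMusc : ∀ F : Set E, IsClosed F → IsClosed {x | (M x ∩ F).Nonempty})
    {U : Set (X × E)} (hU : IsOpen U) (hMU : {p : X × E | p.2 ∈ M p.1} ⊆ U) (x₀ : X) :
    ∃ O : Set X, IsOpen O ∧ x₀ ∈ O ∧ ∃ φ : E → ℝ, Continuous φ ∧ (∀ y, φ y ≤ 1) ∧
      QuasiconcaveOn ℝ univ φ ∧ (∀ x ∈ O, ∀ y ∈ M x, φ y = 1) ∧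
      ∀ x ∈ O, ∀ y ∈ Y, (x, y) ∉ U → φ y ≠ 1 := by
  obtain ⟨T, hT, hTM, hTK⟩ := exists_finset_separating_of_isCompact (hMconv x₀) (hMclosed x₀)
    (hY.diff (hU.preimage (Continuous.prodMk_right x₀)))
    (disjoint_left.2 fun y hy hK => hK.2 (hMU hy))
  set P := Y ∩ ⋂ q ∈ T, {y | q.1 y ≤ q.2}
  have hP : IsCompact P :=
    hY.inter_right (isClosed_biInter fun q _ => isClosed_le q.1.continuous continuous_const)
  have hPU : {x₀} ×ˢ P ⊆ U := by
    rintro ⟨x, y⟩ ⟨rfl, hyY, hyT⟩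
    by_contra hyU
    obtain ⟨q, hq, hlt⟩ := hTK y ⟨hyY, hyU⟩
    exact (mem_iInter₂.1 hyT q hq).not_gt hlt
  obtain ⟨O₁, V, hO₁, -, hx₀, hPV, hO₁V⟩ := generalized_tube_lemma isCompact_singleton hP hU hPU
  have hstay : ∀ q ∈ T, IsOpen {x | ∀ y ∈ M x, q.1 y < q.2} := fun q _ => by
    convert (hMusc {y | q.2 ≤ q.1 y} (isClosed_le continuous_const q.1.continuous)).isOpen_compl
      using 1
    ext x
    simp [Set.Nonempty]
  refine ⟨O₁ ∩ ⋂ q ∈ T, {x | ∀ y ∈ M x, q.1 y < q.2}, hO₁.inter (isOpen_biInter_finset hstay),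
    ⟨hx₀ rfl, mem_iInter₂.2 fun q hq y hy => hTM q hq y hy⟩, polyhedralCap T hT,
    continuous_polyhedralCap T hT, polyhedralCap_le_one T hT, quasiconcaveOn_polyhedralCap T hT,
    fun x hx y hy => ?_, fun x hx y hy hxy => ?_⟩
  · exact (polyhedralCap_eq_one_iff T hT).2 fun q hq => (mem_iInter₂.1 hx.2 q hq y hy).le
  · rw [Ne, polyhedralCap_eq_one_iff]
    exact fun hyT => hxy (hO₁V ⟨hx.1, hPV ⟨hy, mem_iInter₂.2 hyT⟩⟩)

/-- The local caps are glued by `⨅ i, max (φ i y) (1 - ρ i x)` over a partition of unity `ρ`: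
unlike a convex combination, an infimum of maxima keeps quasi-concavity in `y`. -/
theorem exists_global_cap [T2Space X] [ParacompactSpace X] (hY : IsCompact Y)
    (hMconv : ∀ x, Convex ℝ (M x)) (hMclosed : ∀ x, IsClosed (M x))
    (hMusc : ∀ F : Set E, IsClosed F → IsClosed {x | (M x ∩ F).Nonempty})
    {U : Set (X × E)} (hU : IsOpen U) (hMU : {p : X × E | p.2 ∈ M p.1} ⊆ U) :
    ∃ ψ : X × E → ℝ, Continuous ψ ∧ (∀ p, ψ p ≤ 1) ∧
      (∀ x, QuasiconcaveOn ℝ univ fun y => ψ (x, y)) ∧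
      (∀ p ∈ {p : X × E | p.2 ∈ M p.1}, ψ p = 1) ∧
      ∀ p ∈ (univ : Set X) ×ˢ Y, p ∉ U → ψ p ≠ 1 := by
  choose O hO hxO φ hφc hφ1 hφq hφM hφU using exists_local_cap hY hMconv hMclosed hMusc hU hMU
  obtain ⟨ρ, hρ⟩ := PartitionOfUnity.exists_isSubordinate isClosed_univ O hO
    fun x _ => mem_iUnion.2 ⟨x, hxO x⟩
  have hweight : ∀ i x, 1 - ρ i x ≤ 1 := fun i x => sub_le_self _ (ρ.nonneg i x)
  have hbdd : ∀ x, BddBelow (range fun i => 1 - ρ i x) := fun x =>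
    ⟨0, forall_mem_range.2 fun i => sub_nonneg.2 (ρ.le_one i x)⟩
  have hbdd' : ∀ p : X × E, BddBelow (range fun i => max (φ i p.2) (1 - ρ i p.1)) := fun p =>
    let ⟨m, hm⟩ := hbdd p.1
    ⟨m, forall_mem_range.2 fun i => (hm ⟨i, rfl⟩).trans (le_max_right _ _)⟩
  have heq_one : ∀ x y, ⨅ i, max (φ i y) (1 - ρ i x) = 1 ↔ ∀ i, 0 < ρ i x → φ i y = 1 :=
    fun x y => by
      have : Nonempty X := ⟨x⟩
      simpa only [sub_lt_self_iff] using ciInf_max_eq_iff (hφ1 · y) (hweight · x) (hbdd x)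
  refine ⟨fun p => ⨅ i, max (φ i p.2) (1 - ρ i p.1), ?_, fun p => ?_, fun x => ?_,
    fun p hp => ?_, fun p hp hpU => ?_⟩
  · refine LocallyFinite.continuous_ciInf
      ((ρ.locallyFinite.preimage_continuous continuous_fst).subset fun i p hp h => hp ?_)
      (fun i => ((hφc i).comp continuous_snd).max
        (continuous_const.sub ((ρ i).continuous.comp continuous_fst)))
      fun i p => max_le (hφ1 i _) (hweight i _)
    rw [h, sub_zero]
    exact max_eq_right (hφ1 i _)
  · have : Nonempty X := ⟨p.1⟩
    exact (ciInf_le (hbdd' p) p.1).trans (max_le (hφ1 _ _) (hweight _ _))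
  · have : Nonempty X := ⟨x⟩
    exact QuasiconcaveOn.ciInf (fun i => (hφq i).monotone_comp (g := (max · (1 - ρ i x)))
      (monotone_id.max monotone_const)) fun y => hbdd' (x, y)
  · exact (heq_one p.1 p.2).2 fun i hi => hφM i p.1 (hρ i (subset_closure hi.ne')) p.2 hp
  · obtain ⟨i, hi⟩ := ρ.exists_pos (mem_univ p.1)
    exact fun h =>
      hφU i p.1 (hρ i (subset_closure hi.ne')) p.2 hp.2 hpU ((heq_one p.1 p.2).1 h i hi)

theorem exists_quasiconcave_argmax_of_graph_eq_iInter [T2Space X] [ParacompactSpace X]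
    (hYconv : Convex ℝ Y) (hY : IsCompact Y) (hMne : ∀ x, (M x).Nonempty)
    (hMconv : ∀ x, Convex ℝ (M x)) (hMclosed : ∀ x, IsClosed (M x))
    (hMusc : ∀ F : Set E, IsClosed F → IsClosed {x | (M x ∩ F).Nonempty})
    {U : ℕ → Set (X × E)} (hU : ∀ n, IsOpen (U n))
    (hgraph : {p : X × E | p.2 ∈ M p.1} = ((univ : Set X) ×ˢ Y) ∩ ⋂ n, U n) :
    ∃ θ : X × E → ℝ, Continuous θ ∧ (∀ p, θ p ∈ Icc (0 : ℝ) 1) ∧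
      {p : X × E | p.2 ∈ M p.1} =
        {p ∈ (univ : Set X) ×ˢ Y | θ p = sSup ((fun z => θ (p.1, z)) '' Y)} ∧
      ∀ x, QuasiconcaveOn ℝ Y fun y => θ (x, y) := by
  have hMS : ∀ p ∈ {p : X × E | p.2 ∈ M p.1}, p ∈ (univ : Set X) ×ˢ Y := fun p hp =>
    (hgraph.subset hp).1
  have hMU : ∀ n, {p : X × E | p.2 ∈ M p.1} ⊆ U n := fun n p hp =>
    mem_iInter.1 (hgraph.subset hp).2 n
  choose ψ hψc hψ1 hψq hψM hψU using fun n =>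
    exists_global_cap hY hMconv hMclosed hMusc (hU n) (hMU n)
  obtain ⟨θ, hθc, hθ01, hθq, hθ1⟩ := exists_quasiconcave_eq_one_iff_forall hψc hψ1 hψq
  have hθ_eq_one : ∀ p ∈ (univ : Set X) ×ˢ Y, θ p = 1 ↔ p ∈ {p : X × E | p.2 ∈ M p.1} := by
    intro p hp
    refine (hθ1 p).trans ⟨fun h => hgraph ▸ ⟨hp, mem_iInter.2 fun n => ?_⟩, fun h n => hψM n p h⟩
    by_contra hpU
    exact hψU n p hp hpU (h n)
  have hsup : ∀ x, sSup ((fun z => θ (x, z)) '' Y) = 1 := fun x => by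
    obtain ⟨y, hy⟩ := hMne x
    have hxy := hMS (x, y) hy
    exact IsGreatest.csSup_eq ⟨⟨y, hxy.2, (hθ_eq_one _ hxy).2 hy⟩,
      forall_mem_image.2 fun z _ => (hθ01 _).2⟩
  refine ⟨θ, hθc, hθ01, ext fun p => ⟨fun hp => ⟨hMS p hp, ?_⟩, fun ⟨hpS, hp⟩ =>
    (hθ_eq_one p hpS).1 (hp.trans (hsup p.1))⟩, fun x =>
    Convex.quasiconcaveOn_restrict (hθq x) (subset_univ Y) hYconv⟩
  rw [hsup, (hθ_eq_one p (hMS p hp)).2 hp]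

end Correspondence

theorem inverse_maximum_paracompact_iff_Gdelta_general
    {X E : Type*} [TopologicalSpace X] [T2Space X] [ParacompactSpace X]
    [AddCommGroup E] [Module ℝ E] [TopologicalSpace E] [IsTopologicalAddGroup E]
    [ContinuousSMul ℝ E] [LocallyConvexSpace ℝ E] [T2Space E]
    (Y : Set E) (hYconv : Convex ℝ Y) (hYcomp : IsCompact Y)
    (M : X → Set E) (hMne : ∀ x, (M x).Nonempty)
    (hMconv : ∀ x, Convex ℝ (M x)) (hMcomp : ∀ x, IsCompact (M x))
    (hMusc : ∀ F : Set E, IsClosed F → IsClosed {x | (M x ∩ F).Nonempty}) :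
    (∃ θ : X × E → ℝ, ContinuousOn θ ((univ : Set X) ×ˢ Y) ∧
      (∀ p ∈ (univ : Set X) ×ˢ Y, θ p ∈ Icc (0 : ℝ) 1) ∧
      {p : X × E | p.2 ∈ M p.1} =
        {p ∈ (univ : Set X) ×ˢ Y | θ p = sSup ((fun z => θ (p.1, z)) '' Y)} ∧
      ∀ x : X, ∀ c : ℝ, Convex ℝ {y ∈ Y | c ≤ θ (x, y)}) ↔
    (∃ U : ℕ → Set (X × E), (∀ n, IsOpen (U n)) ∧
      {p : X × E | p.2 ∈ M p.1} = ((univ : Set X) ×ˢ Y) ∩ ⋂ n, U n) := by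
  constructor
  · rintro ⟨θ, hθ, -, hgraph, -⟩
    exact hgraph ▸ exists_isOpen_argmax_eq_inter_iInter hYcomp hθ
  · rintro ⟨U, hU, hgraph⟩
    obtain ⟨θ, hθ, hθ01, hθgraph, hθq⟩ := exists_quasiconcave_argmax_of_graph_eq_iInter hYconv
      hYcomp hMne hMconv (fun x => (hMcomp x).isClosed) hMusc hU hgraph
    exact ⟨θ, hθ.continuousOn, fun p _ => hθ01 p, hθgraph, hθq⟩

/-- For a nonempty paracompact space `X`, a nonempty convex compact subset `Y` of a
Hausdorff locally convex space, and an upper semicontinuous correspondence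
`M : X ⇉ Y` with nonempty convex compact values, the existence of a continuous
`θ : X × Y → [0,1]`, quasi-concave in the second variable, realizing `M` as argmax
correspondence over `Y`, is equivalent to `gra M` being a `Gδ` subset of `X × Y`. -/
theorem inverse_maximum_paracompact_iff_Gdelta
    {X E : Type*} [TopologicalSpace X] [T2Space X] [ParacompactSpace X] [Nonempty X]
    [AddCommGroup E] [Module ℝ E] [TopologicalSpace E] [IsTopologicalAddGroup E]
    [ContinuousSMul ℝ E] [LocallyConvexSpace ℝ E] [T2Space E]
    (Y : Set E) (hYne : Y.Nonempty) (hYconv : Convex ℝ Y) (hYcomp : IsCompact Y)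
    (M : X → Set E) (hMY : ∀ x, M x ⊆ Y) (hMne : ∀ x, (M x).Nonempty)
    (hMconv : ∀ x, Convex ℝ (M x)) (hMcomp : ∀ x, IsCompact (M x))
    (hMusc : ∀ F : Set E, IsClosed F → IsClosed {x | (M x ∩ F).Nonempty}) :
    (∃ θ : X × E → ℝ, ContinuousOn θ ((univ : Set X) ×ˢ Y) ∧
      (∀ p ∈ (univ : Set X) ×ˢ Y, θ p ∈ Icc (0 : ℝ) 1) ∧
      {p : X × E | p.2 ∈ M p.1} =
        {p ∈ (univ : Set X) ×ˢ Y | θ p = sSup ((fun z => θ (p.1, z)) '' Y)} ∧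
      ∀ x : X, ∀ c : ℝ, Convex ℝ {y ∈ Y | c ≤ θ (x, y)}) ↔
    (∃ U : ℕ → Set (X × E), (∀ n, IsOpen (U n)) ∧
      {p : X × E | p.2 ∈ M p.1} = ((univ : Set X) ×ˢ Y) ∩ ⋂ n, U n) :=
  inverse_maximum_paracompact_iff_Gdelta_general Y hYconv hYcomp M hMne hMconv hMcomp hMusc
end
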